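/- The function c(n) = (n² − 1)(n⁴ + n² + 15)/420 satisfies, for all integers n ≥ 2: c(2n+1) = (n³(n+2)/(2n+1))·(3c(n) + c(n+2)) − ((n−1)(n+1)³/(2n+1))·(c(n−1) + 3c(n+1)), and for all n ≥ 3: c(2n) = ((n−1)²(n+2)/4)·(2c(n−1) + c(n) + c(n+2) − c(2)) − ((n−2)(n+1)²/4)·(c(n−2) + c(n) + 2c(n+1) − c(2)). -/

import Mathlib

noncomputable def c : ℕ → ℚ := fun n => ((n : ℚ) ^ 2 - 1) * ((n : ℚ) ^ 4 + (n : ℚ) ^ 2 + 15) / 420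

/-!
Both recurrences are polynomial identities in `n`. Once the truncated subtractions `n - 1` and
`n - 2` are cast to `ℚ`, every term is the rational polynomial `cRat` evaluated at an affine
function of `n`, and after clearing the denominator `2n + 1` the identities hold for all `x : ℚ`.
-/

noncomputable def cRat (x : ℚ) : ℚ := (x ^ 2 - 1) * (x ^ 4 + x ^ 2 + 15) / 420

lemma c_eq_cRat (n : ℕ) : c n = cRat n := rfl

lemma c_sub_eq_cRat {n k : ℕ} (h : k ≤ n) : c (n - k) = cRat ((n : ℚ) - k) := by
  rw [c_eq_cRat, Nat.cast_sub h]

lemma cRat_two_mul_add_one {x : ℚ} (hx : 2 * x + 1 ≠ 0) :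
    cRat (2 * x + 1) = (x ^ 3 * (x + 2) / (2 * x + 1)) * (3 * cRat x + cRat (x + 2))
      - ((x - 1) * (x + 1) ^ 3 / (2 * x + 1)) * (cRat (x - 1) + 3 * cRat (x + 1)) := by
  unfold cRat
  field_simp
  ring

lemma cRat_two_mul (x : ℚ) :
    cRat (2 * x) = ((x - 1) ^ 2 * (x + 2) / 4) * (2 * cRat (x - 1) + cRat x + cRat (x + 2) - cRat 2)
      - ((x - 2) * (x + 1) ^ 2 / 4) * (cRat (x - 2) + cRat x + 2 * cRat (x + 1) - cRat 2) := by
  unfold cRat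
  ring

theorem stmt15 :
    (∀ n : ℕ, 2 ≤ n →
      c (2 * n + 1) = ((n : ℚ) ^ 3 * (n + 2) / (2 * n + 1)) * (3 * c n + c (n + 2))
        - (((n : ℚ) - 1) * ((n : ℚ) + 1) ^ 3 / (2 * n + 1)) * (c (n - 1) + 3 * c (n + 1))) ∧
    (∀ n : ℕ, 3 ≤ n →
      c (2 * n) = (((n : ℚ) - 1) ^ 2 * ((n : ℚ) + 2) / 4) * (2 * c (n - 1) + c n + c (n + 2) - c 2)
        - (((n : ℚ) - 2) * ((n : ℚ) + 1) ^ 2 / 4) * (c (n - 2) + c n + 2 * c (n + 1) - c 2)) := by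
  constructor
  · intro n hn
    rw [c_sub_eq_cRat (by omega : 1 ≤ n)]
    simp only [c_eq_cRat, Nat.cast_add, Nat.cast_mul, Nat.cast_ofNat, Nat.cast_one]
    exact cRat_two_mul_add_one (by positivity)
  · intro n hn
    rw [c_sub_eq_cRat (by omega : 1 ≤ n), c_sub_eq_cRat (by omega : 2 ≤ n)]
    simp only [c_eq_cRat, Nat.cast_add, Nat.cast_mul, Nat.cast_ofNat, Nat.cast_one]
    exact cRat_two_mul n
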